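/- arXiv:1702.00605 — 2 statements merged into one kernel-verified Lean document; each statement's English description precedes it below -/
import Mathlib

section
/- A densely defined sesquilinear form Ω on a subspace D of a Hilbert space H is q-closable if and only if it admits a q-closed extension. -/
noncomputable section

open Filter Topology Function
open scoped InnerProductSpace

namespace Paper

variable {V : Type} [AddCommGroup V] [Module ℂ V]

/-- `n` is a norm on the complex vector space `V`. -/
def IsNormFn (n : V → ℝ) : Prop :=
  (∀ x : V, n x = 0 ↔ x = 0) ∧
    (∀ (c : ℂ) (x : V), n (c • x) = ‖c‖ * n x) ∧
      ∀ x y : V, n (x + y) ≤ n x + n y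

/-- `ξ` is a Cauchy sequence with respect to the norm `n`. -/
def IsCauchyWrt (n : V → ℝ) (ξ : ℕ → V) : Prop :=
  ∀ ε : ℝ, 0 < ε → ∃ N : ℕ, ∀ p q : ℕ, N ≤ p → N ≤ q → n (ξ p - ξ q) < ε

/-- `ξ` tends to `x` with respect to the norm `n`. -/
def TendstoWrt (n : V → ℝ) (ξ : ℕ → V) (x : V) : Prop :=
  Tendsto (fun k => n (ξ k - x)) atTop (𝓝 0)

/-- `V` is complete with respect to the norm `n`. -/
def CompleteWrt (n : V → ℝ) : Prop :=
  ∀ ξ : ℕ → V, IsCauchyWrt n ξ → ∃ x : V, TendstoWrt n ξ x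

/-- The two norms `n₁` and `n₂` are equivalent. -/
def EquivNorms (n₁ n₂ : V → ℝ) : Prop :=
  ∃ c₁ : ℝ, 0 < c₁ ∧ ∃ c₂ : ℝ, 0 < c₂ ∧ ∀ x : V, n₁ x ≤ c₁ * n₂ x ∧ n₂ x ≤ c₂ * n₁ x

/-- `Ω` is a sesquilinear form: linear in the first entry, conjugate-linear in the second. -/
def IsSesq (Ω : V → V → ℂ) : Prop :=
  (∀ η : V, IsLinearMap ℂ fun ξ => Ω ξ η) ∧
    ∀ ξ : V, IsLinearMap ℂ fun η => (starRingEnd ℂ) (Ω ξ η)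

/-- `T` is a positive form: `T(ξ,ξ) ≥ 0` for every `ξ`. -/
def IsPositiveForm (T : V → V → ℂ) : Prop :=
  ∀ x : V, (T x x).im = 0 ∧ 0 ≤ (T x x).re

/-- The norm `n` is compatible with the positive sesquilinear form `T`. -/
def CompatibleWithForm (T : V → V → ℂ) (n : V → ℝ) : Prop :=
  (∃ α : ℝ, 0 < α ∧ ∀ ξ : V, (T ξ ξ).re ≤ α * n ξ ^ 2) ∧
    ∀ ξ : ℕ → V, Tendsto (fun k => (T (ξ k) (ξ k)).re) atTop (𝓝 0) →
      IsCauchyWrt n ξ → Tendsto (fun k => n (ξ k)) atTop (𝓝 0)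

/-- A realization of `(V, n)` as a dense subspace of a reflexive Banach space `E`. -/
structure BanachModel (V : Type) [AddCommGroup V] [Module ℂ V] (n : V → ℝ) : Type 1 where
  E : Type
  [instGroup : NormedAddCommGroup E]
  [instSpace : NormedSpace ℂ E]
  [instComplete : CompleteSpace E]
  j : V →ₗ[ℂ] E
  isometry : ∀ x : V, ‖j x‖ = n x
  dense : DenseRange j
  reflexive : Surjective (NormedSpace.inclusionInDoubleDual ℂ E)

/-- `V` endowed with the norm `n` is a reflexive Banach space. -/
def IsReflexiveBanachWrt (n : V → ℝ) : Prop :=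
  ∃ M : BanachModel V n, Surjective M.j

/-- The completion of `V` with respect to the norm `n` is a reflexive Banach space. -/
def CompletionIsReflexiveBanach (n : V → ℝ) : Prop :=
  Nonempty (BanachModel V n)

variable {H : Type} [NormedAddCommGroup H] [InnerProductSpace ℂ H]

/-- The embedding of `D[n]` into `H` is continuous. -/
def EmbedsContinuously (D : Submodule ℂ H) (n : D → ℝ) : Prop :=
  ∃ α : ℝ, 0 < α ∧ ∀ ξ : D, ‖(ξ : H)‖ ≤ α * n ξ

/-- The norm `n` on `D` is compatible with the inner product of `H`. -/
def CompatibleWithInner (D : Submodule ℂ H) (n : D → ℝ) : Prop :=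
  EmbedsContinuously D n ∧
    ∀ ξ : ℕ → D, Tendsto (fun k => ‖(ξ k : H)‖) atTop (𝓝 0) →
      IsCauchyWrt n ξ → Tendsto (fun k => n (ξ k)) atTop (𝓝 0)

/-- The form `Ω` is bounded on `D[n]`. -/
def BoundedOn (D : Submodule ℂ H) (Ω : D → D → ℂ) (n : D → ℝ) : Prop :=
  ∃ β : ℝ, 0 < β ∧ ∀ ξ η : D, ‖Ω ξ η‖ ≤ β * n ξ * n η

/-- `Ω` is q-closed with respect to the norm `n` (Definition 5.2 of Di Bella–Trapani). -/
def IsQClosed (D : Submodule ℂ H) (Ω : D → D → ℂ) (n : D → ℝ) : Prop :=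
  IsNormFn n ∧ CompatibleWithInner D n ∧ IsReflexiveBanachWrt n ∧ BoundedOn D Ω n

/-- `Ω` is q-closable with respect to the norm `n`. -/
def IsQClosable (D : Submodule ℂ H) (Ω : D → D → ℂ) (n : D → ℝ) : Prop :=
  IsNormFn n ∧ CompatibleWithInner D n ∧ CompletionIsReflexiveBanach n ∧ BoundedOn D Ω n

/-- `Λ` is a bounded conjugate-linear functional on `D[n]`,
i.e. an element of the conjugate dual of `D[n]`. -/
def MemConjDual (D : Submodule ℂ H) (n : D → ℝ) (Λ : D → ℂ) : Prop :=
  (∀ x y : D, Λ (x + y) = Λ x + Λ y) ∧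
    (∀ (c : ℂ) (x : D), Λ (c • x) = (starRingEnd ℂ) c * Λ x) ∧
      ∃ C : ℝ, ∀ x : D, ‖Λ x‖ ≤ C * n x

/-- `Υ` is a bounded sesquilinear form on `H`. -/
def IsBoundedForm (Υ : H → H → ℂ) : Prop :=
  IsSesq Υ ∧ ∃ C : ℝ, ∀ x y : H, ‖Υ x y‖ ≤ C * ‖x‖ * ‖y‖

/-- `Υ ∈ P₀(Ω)`: `N(Ω+Υ) = {0}` and every element of the conjugate dual of `D[n]`
is represented by `Ω+Υ`. -/
def InP0 (D : Submodule ℂ H) (Ω : D → D → ℂ) (n : D → ℝ) (Υ : H → H → ℂ) : Prop :=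
  (∀ ξ : D, (∀ η : D, Ω ξ η + Υ ↑ξ ↑η = 0) → ξ = 0) ∧
    ∀ Λ : D → ℂ, MemConjDual D n Λ → ∃ ξ : D, ∀ η : D, Λ η = Ω ξ η + Υ ↑ξ ↑η

/-- `Ω` is solvable with respect to the norm `n`. -/
def IsSolvable (D : Submodule ℂ H) (Ω : D → D → ℂ) (n : D → ℝ) : Prop :=
  IsQClosed D Ω n ∧ ∃ Υ : H → H → ℂ, IsBoundedForm Υ ∧ InP0 D Ω n Υ

/-- The numerical range of a form on `D`. -/
def NumRangeForm (D : Submodule ℂ H) (Ω : D → D → ℂ) : Set ℂ :=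
  {z : ℂ | ∃ ξ : D, ‖(ξ : H)‖ = 1 ∧ z = Ω ξ ξ}

/-- The numerical range of a form on `H`. -/
def NumRangeFormH (Υ : H → H → ℂ) : Set ℂ :=
  {z : ℂ | ∃ x : H, ‖x‖ = 1 ∧ z = Υ x x}

/-- `sup { |Θ(ξ,η)| : ‖η‖_Ω = 1 }`. -/
def FormSup (D : Submodule ℂ H) (Θ : D → D → ℂ) (n : D → ℝ) (ξ : D) : ℝ :=
  sSup {r : ℝ | ∃ η : D, n η = 1 ∧ r = ‖Θ ξ η‖}

end Paper

/-!
If `Ω` is q-closable, let `E` be the reflexive completion of `D[‖·‖_Ω]`. The embedding `D → H`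
is bounded, so it extends to a bounded map `T : E → H`, and compatibility of the norm with the
inner product says exactly that `T` is injective. The form `Ω` extends, by density, to a bounded
sesquilinear form on `E`; transporting it and the norm of `E` along `E ≃ T E` makes `Ω` q-closed
on `D' = T E ⊇ D`. Conversely, the restriction to `D` of a q-closed extension is q-closable: the
completion of `D` is the closure of `D` in the reflexive space `D'`, and closed subspaces of
reflexive spaces are reflexive (by Hahn–Banach).
-/

section Reflexive

variable {𝕜 E : Type*} [RCLike 𝕜] [NormedAddCommGroup E] [NormedSpace 𝕜 E]

theorem Submodule.exists_dual_eq_zero_of_notMem {S : Submodule 𝕜 E} (hS : IsClosed (S : Set E))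
    {x : E} (hx : x ∉ S) : ∃ f : StrongDual 𝕜 E, (∀ y ∈ S, f y = 0) ∧ f x ≠ 0 := by
  have hπx : ‖S.mkQL x‖ ≠ 0 := by simpa using hx
  obtain ⟨g, -, hg⟩ := exists_dual_vector 𝕜 _ hπx
  refine ⟨g.comp S.mkQL, fun y hy => ?_, ?_⟩
  · simp [(Submodule.Quotient.mk_eq_zero S).2 hy]
  · rw [ContinuousLinearMap.comp_apply, hg]
    exact_mod_cast hπx

theorem NormedSpace.inclusionInDoubleDual_surjective_submodule
    (hE : Surjective (inclusionInDoubleDual 𝕜 E)) {S : Submodule 𝕜 E}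
    (hS : IsClosed (S : Set E)) : Surjective (inclusionInDoubleDual 𝕜 S) := by
  intro Φ
  let restrict : StrongDual 𝕜 E →L[𝕜] StrongDual 𝕜 S :=
    (ContinuousLinearMap.compL 𝕜 S E 𝕜).flip S.subtypeL
  obtain ⟨x, hx⟩ := hE (Φ.comp restrict)
  have hxΦ : ∀ f : StrongDual 𝕜 E, f x = Φ (restrict f) := fun f =>
    congrArg (fun F : StrongDual 𝕜 (StrongDual 𝕜 E) => F f) hx
  have hxS : x ∈ S := by
    by_contra hxS
    obtain ⟨f, hfS, hfx⟩ := S.exists_dual_eq_zero_of_notMem hS hxS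
    have : restrict f = 0 := by ext y; exact hfS y y.2
    exact hfx (by rw [hxΦ, this, map_zero])
  refine ⟨⟨x, hxS⟩, ContinuousLinearMap.ext fun g => ?_⟩
  obtain ⟨f, hfg, -⟩ := exists_extension_norm_eq S g
  have : restrict f = g := by ext y; exact hfg y
  rw [dual_def, ← this, ← hxΦ]
  rfl

end Reflexive

section Extend

variable {𝕜 V E : Type*} [RCLike 𝕜] [AddCommGroup V] [Module 𝕜 V]
  [NormedAddCommGroup E] [NormedSpace 𝕜 E]

theorem LinearMap.exists_extend₂_of_norm (b : V →ₗ[𝕜] V →ₗ⋆[𝕜] 𝕜) (j : V →ₗ[𝕜] E)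
    (hj : DenseRange j) {C : ℝ} (hC : 0 ≤ C) (hb : ∀ x y, ‖b x y‖ ≤ C * ‖j x‖ * ‖j y‖) :
    ∃ B : E →L[𝕜] E →L⋆[𝕜] 𝕜, (∀ x y, B (j x) (j y) = b x y) ∧
      ∀ u v, ‖B u v‖ ≤ C * ‖u‖ * ‖v‖ := by
  have hb' : ∀ x, ∃ C', ∀ y, ‖b x y‖ ≤ C' * ‖j y‖ := fun x => ⟨C * ‖j x‖, hb x⟩
  have ext_eq : ∀ x y, (b x).extendOfNorm j (j y) = b x y := fun x y =>
    LinearMap.extendOfNorm_eq hj (hb' x) y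
  have ext_unique : ∀ x (g : E →L⋆[𝕜] 𝕜), (∀ y, g (j y) = b x y) → (b x).extendOfNorm j = g :=
    fun x g hg => LinearMap.extendOfNorm_unique hj _ (hb x) g (LinearMap.ext hg)
  let Φ : V →ₗ[𝕜] E →L⋆[𝕜] 𝕜 :=
    { toFun := fun x => (b x).extendOfNorm j
      map_add' := fun x x' => ext_unique _ _ fun y => by simp [ext_eq]
      map_smul' := fun c x => ext_unique _ _ fun y => by simp [ext_eq] }
  have hΦ : ∀ x, ‖Φ x‖ ≤ C * ‖j x‖ := fun x =>
    LinearMap.opNorm_extendOfNorm_le hj (by positivity) (hb x)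
  refine ⟨Φ.extendOfNorm j, fun x y => ?_, fun u v => ?_⟩
  · rw [LinearMap.extendOfNorm_eq hj ⟨C, hΦ⟩]
    exact ext_eq x y
  · calc ‖Φ.extendOfNorm j u v‖ ≤ ‖Φ.extendOfNorm j u‖ * ‖v‖ := (Φ.extendOfNorm j u).le_opNorm v
      _ ≤ C * ‖u‖ * ‖v‖ := by
        gcongr
        exact LinearMap.norm_extendOfNorm_apply_le hj C hΦ u

end Extend

namespace Paper

attribute [local instance] BanachModel.instGroup BanachModel.instSpace BanachModel.instComplete

section Norms

variable {V W E : Type} [AddCommGroup V] [Module ℂ V] [AddCommGroup W] [Module ℂ W]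
  [NormedAddCommGroup E] [NormedSpace ℂ E]

theorem isNormFn_norm : IsNormFn (fun u : E => ‖u‖) :=
  ⟨fun _ => norm_eq_zero, norm_smul, norm_add_le⟩

theorem IsNormFn.comp_injective {n : W → ℝ} (hn : IsNormFn n) (f : V →ₗ[ℂ] W)
    (hf : Injective f) : IsNormFn (fun x => n (f x)) :=
  ⟨fun _ => (hn.1 _).trans (map_eq_zero_iff f hf),
    fun c x => (congrArg n (map_smul f c x)).trans (hn.2.1 c (f x)),
    fun x y => (congrArg n (map_add f x y)).trans_le (hn.2.2 _ _)⟩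

theorem IsCauchyWrt.comp {n : W → ℝ} {ξ : ℕ → V} (f : V →ₗ[ℂ] W)
    (h : IsCauchyWrt (fun x => n (f x)) ξ) : IsCauchyWrt n (fun k => f (ξ k)) := by
  intro ε hε
  obtain ⟨N, hN⟩ := h ε hε
  exact ⟨N, fun p q hp hq => by rw [← map_sub]; exact hN p q hp hq⟩

theorem isCauchyWrt_norm_comp_iff (f : V →ₗ[ℂ] E) (ξ : ℕ → V) :
    IsCauchyWrt (fun x => ‖f x‖) ξ ↔ CauchySeq (fun k => f (ξ k)) := by
  simp only [IsCauchyWrt, Metric.cauchySeq_iff, dist_eq_norm, ← map_sub]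
  exact forall₂_congr fun ε _ => exists_congr fun N =>
    ⟨fun h p hp q hq => h p q hp hq, fun h p q hp hq => h p hp q hq⟩

theorem BanachModel.norm_j_eq {n : V → ℝ} (M : BanachModel V n) : (fun x => ‖M.j x‖) = n :=
  funext M.isometry

theorem isReflexiveBanachWrt_norm_comp [CompleteSpace E]
    (hE : Surjective (NormedSpace.inclusionInDoubleDual ℂ E)) (e : V ≃ₗ[ℂ] E) :
    IsReflexiveBanachWrt (fun x => ‖e x‖) :=
  ⟨{ E := E, j := e.toLinearMap, isometry := fun _ => rfl, dense := e.surjective.denseRange,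
      reflexive := hE }, e.surjective⟩

theorem IsReflexiveBanachWrt.completionIsReflexiveBanach {n : V → ℝ}
    (h : IsReflexiveBanachWrt n) : CompletionIsReflexiveBanach n :=
  let ⟨M, _⟩ := h
  ⟨M⟩

theorem CompletionIsReflexiveBanach.comp {n : W → ℝ} (h : CompletionIsReflexiveBanach n)
    (f : V →ₗ[ℂ] W) : CompletionIsReflexiveBanach (fun x => n (f x)) := by
  obtain ⟨M⟩ := h
  let S := (LinearMap.range (M.j ∘ₗ f)).topologicalClosure
  have hS : IsClosed (S : Set M.E) := Submodule.isClosed_topologicalClosure _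
  have : CompleteSpace S := hS.completeSpace_coe
  refine ⟨{ E := S
            j := (M.j ∘ₗ f).codRestrict S fun x => Submodule.le_topologicalClosure _ ⟨x, rfl⟩
            isometry := fun x => M.isometry (f x)
            dense := Subtype.dense_iff.2 ?_
            reflexive := NormedSpace.inclusionInDoubleDual_surjective_submodule M.reflexive hS }⟩
  rw [← Set.range_comp]
  exact (Submodule.topologicalClosure_coe _).le

theorem isSesq_comp (B : E →L[ℂ] E →L⋆[ℂ] ℂ) (f : V →ₗ[ℂ] E) :
    IsSesq (fun x y => B (f x) (f y)) :=
  ⟨fun y => ⟨fun x x' => by simp, fun c x => by simp⟩,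
    fun x => ⟨fun y y' => by simp, fun c y => by simp⟩⟩

def IsSesq.toLinearMap₂ {Ω : V → V → ℂ} (h : IsSesq Ω) : V →ₗ[ℂ] V →ₗ⋆[ℂ] ℂ :=
  LinearMap.mk₂'ₛₗ _ _ Ω (fun x x' y => (h.1 y).map_add x x') (fun c x y => (h.1 y).map_smul c x)
    (fun x y y' => by simpa using congrArg (starRingEnd ℂ) ((h.2 x).map_add y y'))
    (fun c x y => by simpa using congrArg (starRingEnd ℂ) ((h.2 x).map_smul c y))

@[simp]
theorem IsSesq.toLinearMap₂_apply {Ω : V → V → ℂ} (h : IsSesq Ω) (x y : V) :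
    h.toLinearMap₂ x y = Ω x y :=
  rfl

end Norms

section Hilbert

variable {H : Type} [NormedAddCommGroup H] [InnerProductSpace ℂ H]

theorem CompatibleWithInner.restrict {D D' : Submodule ℂ H} (hle : D ≤ D') {n : D' → ℝ}
    (h : CompatibleWithInner D' n) :
    CompatibleWithInner D (fun ξ => n (Submodule.inclusion hle ξ)) := by
  obtain ⟨⟨α, hα, hemb⟩, hclos⟩ := h
  exact ⟨⟨α, hα, fun ξ => hemb (Submodule.inclusion hle ξ)⟩,
    fun ξ h0 hξ => hclos _ h0 (hξ.comp _)⟩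

theorem IsQClosed.isQClosable_restrict {D D' : Submodule ℂ H} (hle : D ≤ D')
    {Ω' : D' → D' → ℂ} {n' : D' → ℝ} (h : IsQClosed D' Ω' n') :
    IsQClosable D (fun ξ η => Ω' (Submodule.inclusion hle ξ) (Submodule.inclusion hle η))
      (fun ξ => n' (Submodule.inclusion hle ξ)) := by
  obtain ⟨hn, hcompat, hrefl, β, hβ, hΩ⟩ := h
  exact ⟨hn.comp_injective _ (Submodule.inclusion_injective hle), hcompat.restrict hle,
    hrefl.completionIsReflexiveBanach.comp _, β, hβ, fun _ _ => hΩ _ _⟩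

variable {E : Type} [NormedAddCommGroup E] [NormedSpace ℂ E] {D' : Submodule ℂ H}

theorem compatibleWithInner_norm_comp [CompleteSpace E] (e : D' ≃ₗ[ℂ] E) (T : E →L[ℂ] H)
    (hTe : ∀ x, T (e x) = x) : CompatibleWithInner D' (fun x => ‖e x‖) := by
  refine ⟨⟨‖T‖ + 1, by positivity, fun x => ?_⟩, fun ξ h0 hξ => ?_⟩
  · calc ‖(x : H)‖ = ‖T (e x)‖ := by rw [hTe]
      _ ≤ ‖T‖ * ‖e x‖ := T.le_opNorm _
      _ ≤ (‖T‖ + 1) * ‖e x‖ := by gcongr; linarith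
  have hT : ∀ u, T u = 0 → u = 0 := by
    intro u hu
    obtain ⟨x, rfl⟩ := e.surjective u
    rw [hTe, ZeroMemClass.coe_eq_zero] at hu
    rw [hu, map_zero]
  obtain ⟨u, hu⟩ := cauchySeq_tendsto_of_complete
    ((isCauchyWrt_norm_comp_iff e.toLinearMap ξ).1 hξ)
  have hTu : Tendsto (fun k => (ξ k : H)) atTop (𝓝 (T u)) := by
    simpa only [Function.comp_def, LinearEquiv.coe_coe, hTe] using
      (T.continuous.tendsto u).comp hu
  have hu0 : u = 0 := hT u (tendsto_nhds_unique hTu (tendsto_zero_iff_norm_tendsto_zero.2 h0))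
  simpa [hu0] using hu.norm

theorem isQClosed_of_linearEquiv [CompleteSpace E]
    (hE : Surjective (NormedSpace.inclusionInDoubleDual ℂ E)) (e : D' ≃ₗ[ℂ] E) (T : E →L[ℂ] H)
    (hTe : ∀ x, T (e x) = x) (B : E →L[ℂ] E →L⋆[ℂ] ℂ) {β : ℝ} (hβ : 0 < β)
    (hB : ∀ u v, ‖B u v‖ ≤ β * ‖u‖ * ‖v‖) :
    IsQClosed D' (fun x y => B (e x) (e y)) (fun x => ‖e x‖) :=
  ⟨isNormFn_norm.comp_injective e.toLinearMap e.injective, compatibleWithInner_norm_comp e T hTe,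
    isReflexiveBanachWrt_norm_comp hE e, β, hβ, fun _ _ => hB _ _⟩

variable [CompleteSpace H] {D : Submodule ℂ H} {n : D → ℝ}

def BanachModel.embedding (M : BanachModel D n) : M.E →L[ℂ] H :=
  D.subtype.extendOfNorm M.j

theorem BanachModel.embedding_j (M : BanachModel D n) (hn : EmbedsContinuously D n) (ξ : D) :
    M.embedding (M.j ξ) = ξ := by
  obtain ⟨α, -, hα⟩ := hn
  exact LinearMap.extendOfNorm_eq M.dense ⟨α, fun ξ => M.isometry ξ ▸ hα ξ⟩ ξ

theorem BanachModel.embedding_injective (M : BanachModel D n) (hn : CompatibleWithInner D n) :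
    Injective M.embedding := by
  refine (injective_iff_map_eq_zero _).2 fun x hx => ?_
  obtain ⟨u, hu_mem, hu⟩ := mem_closure_iff_seq_limit.1 (M.dense x)
  choose ξ hξ using hu_mem
  have hjξ : Tendsto (fun k => M.j (ξ k)) atTop (𝓝 x) := by simpa only [hξ] using hu
  have hcauchy : IsCauchyWrt n ξ := by
    rw [← M.norm_j_eq, isCauchyWrt_norm_comp_iff]
    exact hjξ.cauchySeq
  have hH : Tendsto (fun k => ‖(ξ k : H)‖) atTop (𝓝 0) := by
    have := ((M.embedding.continuous.tendsto x).comp hjξ).norm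
    simpa only [Function.comp_def, M.embedding_j hn.1, hx, norm_zero] using this
  have hj0 : Tendsto (fun k => M.j (ξ k)) atTop (𝓝 0) := by
    rw [tendsto_zero_iff_norm_tendsto_zero]
    simpa only [M.isometry] using hn.2 ξ hH hcauchy
  exact tendsto_nhds_unique hjξ hj0

theorem IsQClosable.exists_isQClosed_extension {Ω : D → D → ℂ} (hΩ : IsSesq Ω)
    (h : IsQClosable D Ω n) :
    ∃ (D' : Submodule ℂ H) (hle : D ≤ D') (Ω' : D' → D' → ℂ) (n' : D' → ℝ),
      IsSesq Ω' ∧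
      (∀ ξ η : D, Ω' (Submodule.inclusion hle ξ) (Submodule.inclusion hle η) = Ω ξ η) ∧
      IsQClosed D' Ω' n' := by
  obtain ⟨-, hcompat, ⟨M⟩, β, hβ, hΩβ⟩ := h
  obtain ⟨B, hBj, hB⟩ := hΩ.toLinearMap₂.exists_extend₂_of_norm M.j M.dense hβ.le
    fun ξ η => by rw [M.isometry, M.isometry]; exact hΩβ ξ η
  have hT := M.embedding_injective hcompat
  let e := (LinearEquiv.ofInjective M.embedding.toLinearMap hT).symm
  have hTe : ∀ x, M.embedding (e x) = x := fun x =>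
    congrArg Subtype.val ((LinearEquiv.ofInjective M.embedding.toLinearMap hT).apply_symm_apply x)
  have hle : D ≤ LinearMap.range M.embedding.toLinearMap := fun ξ hξ =>
    ⟨M.j ⟨ξ, hξ⟩, M.embedding_j hcompat.1 _⟩
  have he : ∀ ξ : D, e (Submodule.inclusion hle ξ) = M.j ξ := fun ξ =>
    hT (by rw [hTe, M.embedding_j hcompat.1]; rfl)
  refine ⟨_, hle, fun x y => B (e x) (e y), fun x => ‖e x‖, isSesq_comp B e.toLinearMap,
    fun ξ η => ?_, isQClosed_of_linearEquiv M.reflexive e M.embedding hTe B hβ hB⟩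
  simp only [he, hBj, IsSesq.toLinearMap₂_apply]

end Hilbert

theorem isQClosable_iff_exists_qclosed_extension_general {H : Type} [NormedAddCommGroup H]
    [InnerProductSpace ℂ H] [CompleteSpace H]
    (D : Submodule ℂ H) (Ω : ↥D → ↥D → ℂ) (hsesq : IsSesq Ω) :
    (∃ n : ↥D → ℝ, IsQClosable D Ω n) ↔
      ∃ (D' : Submodule ℂ H) (hle : D ≤ D') (Ω' : ↥D' → ↥D' → ℂ) (n' : ↥D' → ℝ),
        IsSesq Ω' ∧
        (∀ ξ η : ↥D, Ω' (Submodule.inclusion hle ξ) (Submodule.inclusion hle η) = Ω ξ η) ∧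
        IsQClosed D' Ω' n' := by
  refine ⟨fun ⟨n, h⟩ => h.exists_isQClosed_extension hsesq, ?_⟩
  rintro ⟨D', hle, Ω', n', -, hrest, hQ⟩
  exact ⟨_, funext₂ hrest ▸ hQ.isQClosable_restrict hle⟩

theorem isQClosable_iff_exists_qclosed_extension {H : Type} [NormedAddCommGroup H]
    [InnerProductSpace ℂ H] [CompleteSpace H]
    (D : Submodule ℂ H) (hD : Dense (D : Set H)) (Ω : ↥D → ↥D → ℂ) (hsesq : IsSesq Ω) :
    (∃ n : ↥D → ℝ, IsQClosable D Ω n) ↔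
      ∃ (D' : Submodule ℂ H) (hle : D ≤ D') (Ω' : ↥D' → ↥D' → ℂ) (n' : ↥D' → ℝ),
        IsSesq Ω' ∧
        (∀ ξ η : ↥D, Ω' (Submodule.inclusion hle ξ) (Submodule.inclusion hle η) = Ω ξ η) ∧
        IsQClosed D' Ω' n' :=
  isQClosable_iff_exists_qclosed_extension_general D Ω hsesq

end Paper
end
end

section
/- Let Ω be a q-closed sesquilinear form on D with respect to ‖·‖_Ω satisfying the condition (qc): whenever (ξₙ) in D satisfies ‖ξₙ‖ → 0 and |Ω(ξₙ,ξₙ)| → 0, then ‖ξₙ‖_Ω → 0. Let Υ be a bounded sesquilinear form on H such that the closure of the numerical range of Ω is disjoint from the closure of the numerical range of -Υ. Then Υ ∈ P₀(Ω); in particular Ω is solvable with respect to ‖·‖_Ω. -/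
noncomputable section

open Filter Topology Function
open scoped InnerProductSpace

/-!
Disjointness of the closed numerical ranges gives `d‖ξ‖² ≤ |(Ω+Υ)(ξ,ξ)|` on `D` for some
`d > 0` (the numerical range of `-Υ` is bounded, so its closure is compact and stays at positive
distance from that of `Ω`). Hence if `(Ω+Υ)(ξₖ,ξₖ) → 0` then `‖ξₖ‖ → 0`, so `Υ(ξₖ,ξₖ) → 0` and
`Ω(ξₖ,ξₖ) → 0`, and (qc) yields `‖ξₖ‖_Ω → 0`: the form `Ω+Υ` is coercive on `D[‖·‖_Ω]`.
A bounded coercive form on a reflexive Banach space `E` induces a conjugate-linear operator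
`E → E*` that is bounded below, hence has closed range; a functional on `E*` annihilating that
range is evaluation at some `x` with `(Ω+Υ)(x,x) = 0`, so `x = 0` and the operator is onto.
-/

theorem Submodule.exists_strongDual_ne_zero_of_notMem {𝕜 F : Type*} [RCLike 𝕜]
    [NormedAddCommGroup F] [NormedSpace 𝕜 F] {p : Submodule 𝕜 F} (hp : IsClosed (p : Set F))
    {x : F} (hx : x ∉ p) : ∃ g : StrongDual 𝕜 F, g x ≠ 0 ∧ ∀ y ∈ p, g y = 0 := by
  have : IsClosed (p : Set F) := hp -- makes `F ⧸ p` a normed space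
  have hx' : p.mkQ x ≠ 0 := by rwa [Submodule.mkQ_apply, Ne, Submodule.Quotient.mk_eq_zero]
  obtain ⟨φ, -, hφ⟩ := exists_dual_vector 𝕜 (p.mkQ x) (norm_ne_zero_iff.mpr hx')
  refine ⟨φ.comp p.mkQL, ?_, fun y hy => ?_⟩
  · change φ (p.mkQ x) ≠ 0
    rw [hφ]
    exact_mod_cast norm_ne_zero_iff.mpr hx'
  · simp [(Submodule.Quotient.mk_eq_zero p).mpr hy]

section ReflexiveLaxMilgram

variable {𝕜 E : Type*} [RCLike 𝕜] [NormedAddCommGroup E] [NormedSpace 𝕜 E]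
  {B : E →L⋆[𝕜] StrongDual 𝕜 E} {c : ℝ}

theorem ContinuousLinearMap.mul_norm_le_norm_of_coercive (hB : ∀ x, c * ‖x‖ ^ 2 ≤ ‖B x x‖)
    (x : E) : c * ‖x‖ ≤ ‖B x‖ := by
  rcases (norm_nonneg x).eq_or_lt with hx | hx
  · rw [← hx, mul_zero]
    exact norm_nonneg _
  · refine le_of_mul_le_mul_right ?_ hx
    calc c * ‖x‖ * ‖x‖ = c * ‖x‖ ^ 2 := by ring
      _ ≤ ‖B x x‖ := hB x
      _ ≤ ‖B x‖ * ‖x‖ := (B x).le_opNorm x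

theorem ContinuousLinearMap.isClosed_range_of_coercive [CompleteSpace E] (hc : 0 < c)
    (hB : ∀ x, c * ‖x‖ ^ 2 ≤ ‖B x x‖) : IsClosed (Set.range B) := by
  refine (B.antilipschitz_of_bound (K := c⁻¹.toNNReal) fun x => ?_).isClosed_range
    B.uniformContinuous
  rw [Real.coe_toNNReal _ (inv_nonneg.mpr hc.le), le_inv_mul_iff₀ hc]
  exact B.mul_norm_le_norm_of_coercive hB x

theorem ContinuousLinearMap.surjective_of_coercive_of_reflexive [CompleteSpace E]
    (hE : Function.Surjective (NormedSpace.inclusionInDoubleDual 𝕜 E)) (hc : 0 < c)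
    (hB : ∀ x, c * ‖x‖ ^ 2 ≤ ‖B x x‖) : Function.Surjective B := by
  intro g
  by_contra hg
  have hgR : g ∉ LinearMap.range (B : E →ₗ⋆[𝕜] StrongDual 𝕜 E) := by simpa using hg
  have hR : IsClosed (LinearMap.range (B : E →ₗ⋆[𝕜] StrongDual 𝕜 E) : Set (StrongDual 𝕜 E)) := by
    rw [LinearMap.coe_range, ContinuousLinearMap.coe_coe]
    exact B.isClosed_range_of_coercive hc hB
  obtain ⟨φ, hφg, hφR⟩ := Submodule.exists_strongDual_ne_zero_of_notMem hR hgR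
  obtain ⟨x, rfl⟩ := hE φ
  have hx : B x x = 0 := hφR (B x) (LinearMap.mem_range_self _ x)
  have hBx := hB x
  rw [hx, norm_zero] at hBx
  rw [norm_eq_zero.mp (sq_nonpos_iff _ |>.mp (nonpos_of_mul_nonpos_right hBx hc)), map_zero] at hφg
  exact hφg rfl

end ReflexiveLaxMilgram

namespace Paper

section Forms

variable {V W : Type} [AddCommGroup V] [Module ℂ V] [AddCommGroup W] [Module ℂ W]
  {T : V → V → ℂ}

theorem IsNormFn.nonneg {n : V → ℝ} (hn : IsNormFn n) (x : V) : 0 ≤ n x := by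
  have h := hn.2.2 x ((-1 : ℂ) • x)
  rw [hn.2.1, neg_one_smul, add_neg_cancel, (hn.1 0).mpr rfl, norm_neg, norm_one] at h
  linarith

theorem IsSesq.map_smul_right (hT : IsSesq T) (ξ : V) (c : ℂ) (η : V) :
    T ξ (c • η) = starRingEnd ℂ c * T ξ η := by
  simpa using congrArg (starRingEnd ℂ) ((hT.2 ξ).map_smul c η)

theorem IsSesq.norm_apply_smul_self (hT : IsSesq T) (c : ℂ) (ξ : V) :
    ‖T (c • ξ) (c • ξ)‖ = ‖c‖ ^ 2 * ‖T ξ ξ‖ := by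
  rw [(hT.1 _).map_smul, hT.map_smul_right, smul_eq_mul, norm_mul, norm_mul, RCLike.norm_conj]
  ring

theorem IsSesq.comp_linearMap (hT : IsSesq T) (f : W →ₗ[ℂ] V) :
    IsSesq fun x y => T (f x) (f y) :=
  ⟨fun y => ((IsLinearMap.mk' _ (hT.1 (f y))).comp f).isLinear,
    fun x => ((IsLinearMap.mk' _ (hT.2 (f x))).comp f).isLinear⟩

theorem IsSesq.add {S : V → V → ℂ} (hT : IsSesq T) (hS : IsSesq S) :
    IsSesq fun x y => T x y + S x y := by
  refine ⟨fun y => ⟨fun a b => ?_, fun c a => ?_⟩, fun x => ⟨fun a b => ?_, fun c a => ?_⟩⟩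
  · simp only [(hT.1 y).map_add, (hS.1 y).map_add]
    ring
  · simp only [(hT.1 y).map_smul, (hS.1 y).map_smul, smul_eq_mul]
    ring
  · simp only [map_add, (hT.2 x).map_add, (hS.2 x).map_add]
    ring
  · simp only [map_add, (hT.2 x).map_smul, (hS.2 x).map_smul, smul_eq_mul]
    ring

theorem IsSesq.exists_continuousDual {E : Type} [NormedAddCommGroup E] [NormedSpace ℂ E]
    {T : E → E → ℂ} (hT : IsSesq T) {β : ℝ} (hβ : ∀ x y, ‖T x y‖ ≤ β * ‖x‖ * ‖y‖) :
    ∃ B : E →L⋆[ℂ] StrongDual ℂ E, ∀ x y, B x y = starRingEnd ℂ (T x y) := by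
  let B₀ : E →ₗ⋆[ℂ] E →ₗ[ℂ] ℂ := LinearMap.mk₂'ₛₗ (starRingEnd ℂ) (RingHom.id ℂ)
    (fun x y => starRingEnd ℂ (T x y))
    (fun a b y => by simp only [(hT.1 y).map_add, map_add])
    (fun c a y => by simp only [(hT.1 y).map_smul, smul_eq_mul, map_mul])
    (fun x => (hT.2 x).map_add) (fun c x => (hT.2 x).map_smul c)
  exact ⟨B₀.mkContinuous₂ β fun x y => by simpa [B₀] using hβ x y, fun x y => rfl⟩

theorem exists_pos_mul_sq_le_of_tendsto {n : V → ℝ} (hn : IsNormFn n) (hT : IsSesq T)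
    (h : ∀ ξ : ℕ → V, Tendsto (fun k => ‖T (ξ k) (ξ k)‖) atTop (𝓝 0) →
      Tendsto (fun k => n (ξ k)) atTop (𝓝 0)) :
    ∃ c > 0, ∀ ξ, c * n ξ ^ 2 ≤ ‖T ξ ξ‖ := by
  by_contra! hcon
  have hu : ∀ k : ℕ, ∃ u, n u = 1 ∧ ‖T u u‖ < 1 / (k + 1) := by
    intro k
    obtain ⟨ξ, hξ⟩ := hcon (1 / (k + 1)) (by positivity)
    have hpos : 0 < n ξ := by
      refine (hn.nonneg ξ).lt_of_ne fun h0 => ?_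
      rw [← h0] at hξ
      linarith [norm_nonneg (T ξ ξ)]
    refine ⟨((n ξ)⁻¹ : ℂ) • ξ, ?_, ?_⟩
    · rw [hn.2.1, norm_inv, Complex.norm_real, Real.norm_of_nonneg hpos.le,
        inv_mul_cancel₀ hpos.ne']
    · rw [hT.norm_apply_smul_self, norm_inv, Complex.norm_real, Real.norm_of_nonneg hpos.le,
        inv_pow, inv_mul_lt_iff₀ (by positivity)]
      linarith
  choose u hu1 hTu using hu
  have hlim := h u (squeeze_zero (fun _ => norm_nonneg _) (fun k => (hTu k).le)
    tendsto_one_div_add_atTop_nhds_zero_nat)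
  simp only [hu1] at hlim
  exact one_ne_zero (tendsto_nhds_unique tendsto_const_nhds hlim)

theorem IsReflexiveBanachWrt.exists_linearEquiv {n : V → ℝ} (hn : IsNormFn n)
    (h : IsReflexiveBanachWrt n) :
    ∃ (E : Type) (_ : NormedAddCommGroup E) (_ : NormedSpace ℂ E) (_ : CompleteSpace E)
      (e : V ≃ₗ[ℂ] E), Surjective (NormedSpace.inclusionInDoubleDual ℂ E) ∧ ∀ ξ, ‖e ξ‖ = n ξ := by
  obtain ⟨M, hM⟩ := h
  let := M.instGroup
  let := M.instSpace
  have hinj : Injective M.j := (injective_iff_map_eq_zero M.j).mpr fun x hx =>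
    (hn.1 x).mp (by rw [← M.isometry, hx, norm_zero])
  exact ⟨M.E, M.instGroup, M.instSpace, M.instComplete,
    LinearEquiv.ofBijective M.j ⟨hinj, hM⟩, M.reflexive, M.isometry⟩

end Forms

section Subspace

variable {H : Type} [NormedAddCommGroup H] [InnerProductSpace ℂ H] {D : Submodule ℂ H}
  {Ω : D → D → ℂ} {Υ : H → H → ℂ} {n : D → ℝ}

def formAdd (D : Submodule ℂ H) (Ω : D → D → ℂ) (Υ : H → H → ℂ) : D → D → ℂ :=
  fun ξ η => Ω ξ η + Υ ξ η

theorem isSesq_formAdd (hΩ : IsSesq Ω) (hΥ : IsSesq Υ) : IsSesq (formAdd D Ω Υ) :=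
  hΩ.add (hΥ.comp_linearMap D.subtype)

theorem boundedOn_formAdd (hΩ : BoundedOn D Ω n) (hn : EmbedsContinuously D n)
    (hΥ : ∃ C, ∀ x y, ‖Υ x y‖ ≤ C * ‖x‖ * ‖y‖) : BoundedOn D (formAdd D Ω Υ) n := by
  obtain ⟨β, hβ, hΩb⟩ := hΩ
  obtain ⟨α, hα, hemb⟩ := hn
  obtain ⟨C, hC⟩ := hΥ
  refine ⟨β + max C 0 * α ^ 2, by positivity, fun ξ η => ?_⟩
  have hH : ‖(ξ : H)‖ * ‖(η : H)‖ ≤ α * n ξ * (α * n η) :=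
    mul_le_mul (hemb ξ) (hemb η) (norm_nonneg _) ((norm_nonneg _).trans (hemb ξ))
  calc ‖formAdd D Ω Υ ξ η‖ ≤ ‖Ω ξ η‖ + ‖Υ ξ η‖ := norm_add_le _ _
    _ ≤ β * n ξ * n η + max C 0 * (‖(ξ : H)‖ * ‖(η : H)‖) := by
        rw [← mul_assoc]
        gcongr
        · exact hΩb ξ η
        · exact (hC _ _).trans (by gcongr; exact le_max_left _ _)
    _ ≤ β * n ξ * n η + max C 0 * (α * n ξ * (α * n η)) := by gcongr
    _ = (β + max C 0 * α ^ 2) * n ξ * n η := by ring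

theorem exists_pos_mul_sq_le_of_disjoint_numRange (hΩ : IsSesq Ω) (hΥ : IsBoundedForm Υ)
    (hdisj : closure (NumRangeForm D Ω) ∩ closure (NumRangeFormH (fun x y => -Υ x y)) = ∅) :
    ∃ d > 0, ∀ ξ : D, d * ‖(ξ : H)‖ ^ 2 ≤ ‖formAdd D Ω Υ ξ ξ‖ := by
  obtain ⟨hΥ, C, hC⟩ := hΥ
  have hK : IsCompact (closure (NumRangeFormH fun x y => -Υ x y)) := by
    refine ((Metric.isBounded_closedBall (x := (0 : ℂ)) (r := C)).subset ?_).isCompact_closure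
    rintro _ ⟨x, hx, rfl⟩
    simpa [hx] using hC x x
  obtain ⟨r, hr, hsep⟩ := Metric.exists_pos_forall_lt_edist hK isClosed_closure
    (Set.disjoint_iff_inter_eq_empty.mpr (by rwa [Set.inter_comm]))
  refine ⟨r, hr, fun ξ => ?_⟩
  rcases (norm_nonneg (ξ : H)).eq_or_lt with h0 | hpos
  · rw [← h0]
    simp
  set u : D := ((‖(ξ : H)‖⁻¹ : ℝ) : ℂ) • ξ
  have hu : ‖(u : H)‖ = 1 := by
    simp [u, norm_smul, hpos.ne']
  have hξ : ξ = ((‖(ξ : H)‖ : ℝ) : ℂ) • u := by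
    simp [u, smul_smul, hpos.ne']
  have hTu : (r : ℝ) < ‖formAdd D Ω Υ u u‖ := by
    have := hsep _ (subset_closure ⟨u, hu, rfl⟩) _ (subset_closure ⟨u, hu, rfl⟩)
    rw [edist_nndist, ENNReal.coe_lt_coe, ← NNReal.coe_lt_coe, coe_nndist, dist_eq_norm] at this
    rwa [← norm_neg, neg_sub, sub_neg_eq_add] at this
  conv_rhs => rw [hξ]
  rw [(isSesq_formAdd hΩ hΥ).norm_apply_smul_self, Complex.norm_real, Real.norm_of_nonneg hpos.le]
  nlinarith

theorem tendsto_zero_of_tendsto_formAdd (hΥ : ∃ C, ∀ x y, ‖Υ x y‖ ≤ C * ‖x‖ * ‖y‖)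
    (hqc : ∀ ξ : ℕ → D, Tendsto (fun k => ‖(ξ k : H)‖) atTop (𝓝 0) →
      Tendsto (fun k => ‖Ω (ξ k) (ξ k)‖) atTop (𝓝 0) → Tendsto (fun k => n (ξ k)) atTop (𝓝 0))
    {d : ℝ} (hd : 0 < d) (hdT : ∀ ξ : D, d * ‖(ξ : H)‖ ^ 2 ≤ ‖formAdd D Ω Υ ξ ξ‖)
    (ξ : ℕ → D) (hξ : Tendsto (fun k => ‖formAdd D Ω Υ (ξ k) (ξ k)‖) atTop (𝓝 0)) :
    Tendsto (fun k => n (ξ k)) atTop (𝓝 0) := by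
  obtain ⟨C, hC⟩ := hΥ
  have hH : Tendsto (fun k => ‖(ξ k : H)‖) atTop (𝓝 0) := by
    have hsq : Tendsto (fun k => ‖(ξ k : H)‖ ^ 2) atTop (𝓝 0) :=
      squeeze_zero (fun _ => by positivity) (fun k => (le_div_iff₀' hd).mpr (hdT (ξ k)))
        (by simpa using hξ.div_const d)
    simpa [Real.sqrt_sq (norm_nonneg _)] using hsq.sqrt
  have hΥξ : Tendsto (fun k => ‖Υ (ξ k) (ξ k)‖) atTop (𝓝 0) :=
    squeeze_zero (fun _ => norm_nonneg _) (fun k => hC _ _) (by simpa using (hH.const_mul C).mul hH)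
  refine hqc ξ hH (squeeze_zero (fun _ => norm_nonneg _) (fun k => ?_) (by simpa using hξ.add hΥξ))
  calc ‖Ω (ξ k) (ξ k)‖ = ‖formAdd D Ω Υ (ξ k) (ξ k) - Υ (ξ k) (ξ k)‖ := by simp [formAdd]
    _ ≤ _ := norm_sub_le _ _

theorem exists_forall_eq_of_coercive (hn : IsNormFn n) (hrefl : IsReflexiveBanachWrt n)
    {T : D → D → ℂ} (hT : IsSesq T) (hb : BoundedOn D T n) {c : ℝ} (hc : 0 < c)
    (hcT : ∀ ξ, c * n ξ ^ 2 ≤ ‖T ξ ξ‖) {Λ : D → ℂ} (hΛ : MemConjDual D n Λ) :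
    ∃ ξ, ∀ η, Λ η = T ξ η := by
  obtain ⟨E, _, _, _, e, hE, he⟩ := hrefl.exists_linearEquiv hn
  obtain ⟨β, -, hβ⟩ := hb
  have hn' : ∀ x, n (e.symm x) = ‖x‖ := fun x => by rw [← he, e.apply_symm_apply]
  obtain ⟨B, hB⟩ := (hT.comp_linearMap e.symm.toLinearMap).exists_continuousDual (β := β)
    fun x y => by simpa only [LinearEquiv.coe_coe, hn'] using hβ (e.symm x) (e.symm y)
  obtain ⟨hadd, hsmul, C, hC⟩ := hΛ
  let g : StrongDual ℂ E := LinearMap.mkContinuous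
    { toFun := fun y => starRingEnd ℂ (Λ (e.symm y))
      map_add' := fun y z => by simp [hadd]
      map_smul' := fun a y => by simp [hsmul] }
    C fun y => by simpa [hn'] using hC (e.symm y)
  obtain ⟨x, hx⟩ := B.surjective_of_coercive_of_reflexive hE hc
    (fun x => by simpa [hB, hn'] using hcT (e.symm x)) g
  refine ⟨e.symm x, fun η => ?_⟩
  simpa [hB, g] using (congrArg (starRingEnd ℂ) (DFunLike.congr_fun hx (e η))).symm

theorem inP0_of_coercive (hΩ : IsSesq Ω) (hΥ : IsSesq Υ) (hn : IsNormFn n)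
    (hrefl : IsReflexiveBanachWrt n) (hb : BoundedOn D (formAdd D Ω Υ) n) {c : ℝ} (hc : 0 < c)
    (hcT : ∀ ξ, c * n ξ ^ 2 ≤ ‖formAdd D Ω Υ ξ ξ‖) : InP0 D Ω n Υ := by
  refine ⟨fun ξ hξ => (hn.1 ξ).mp ?_, fun Λ hΛ =>
    exists_forall_eq_of_coercive hn hrefl (isSesq_formAdd hΩ hΥ) hb hc hcT hΛ⟩
  have h := hcT ξ
  rw [formAdd, hξ ξ, norm_zero] at h
  exact sq_nonpos_iff _ |>.mp (nonpos_of_mul_nonpos_right h hc)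

end Subspace

theorem solvable_of_qc_condition_general {H : Type} [NormedAddCommGroup H] [InnerProductSpace ℂ H]
    (D : Submodule ℂ H)
    (Ω : ↥D → ↥D → ℂ) (hsesq : IsSesq Ω) (n : ↥D → ℝ) (hq : IsQClosed D Ω n)
    (hqc : ∀ ξ : ℕ → ↥D, Tendsto (fun k => ‖(ξ k : H)‖) atTop (𝓝 0) →
      Tendsto (fun k => ‖Ω (ξ k) (ξ k)‖) atTop (𝓝 0) →
        Tendsto (fun k => n (ξ k)) atTop (𝓝 0))
    (Υ : H → H → ℂ) (hΥ : IsBoundedForm Υ)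
    (hdisj : closure (NumRangeForm D Ω) ∩ closure (NumRangeFormH (fun x y => -Υ x y)) = ∅) :
    InP0 D Ω n Υ ∧ IsSolvable D Ω n := by
  have ⟨hn, ⟨hemb, _⟩, hrefl, hΩb⟩ := hq
  obtain ⟨d, hd, hdT⟩ := exists_pos_mul_sq_le_of_disjoint_numRange hsesq hΥ hdisj
  obtain ⟨c, hc, hcT⟩ := exists_pos_mul_sq_le_of_tendsto hn (isSesq_formAdd hsesq hΥ.1)
    (tendsto_zero_of_tendsto_formAdd hΥ.2 hqc hd hdT)
  have hP0 := inP0_of_coercive hsesq hΥ.1 hn hrefl (boundedOn_formAdd hΩb hemb hΥ.2) hc hcT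
  exact ⟨hP0, hq, Υ, hΥ, hP0⟩

theorem solvable_of_qc_condition {H : Type} [NormedAddCommGroup H] [InnerProductSpace ℂ H]
    [CompleteSpace H] (D : Submodule ℂ H) (hD : Dense (D : Set H))
    (Ω : ↥D → ↥D → ℂ) (hsesq : IsSesq Ω) (n : ↥D → ℝ) (hq : IsQClosed D Ω n)
    (hqc : ∀ ξ : ℕ → ↥D, Tendsto (fun k => ‖(ξ k : H)‖) atTop (𝓝 0) →
      Tendsto (fun k => ‖Ω (ξ k) (ξ k)‖) atTop (𝓝 0) →
        Tendsto (fun k => n (ξ k)) atTop (𝓝 0))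
    (Υ : H → H → ℂ) (hΥ : IsBoundedForm Υ)
    (hdisj : closure (NumRangeForm D Ω) ∩ closure (NumRangeFormH (fun x y => -Υ x y)) = ∅) :
    InP0 D Ω n Υ ∧ IsSolvable D Ω n :=
  solvable_of_qc_condition_general D Ω hsesq n hq hqc Υ hΥ hdisj

end Paper
end
end
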